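/- Fix φ : ℝ → ℝ smooth, odd, supported in (−1,1), with ∫_ℝ φ(x)² dx = 1, and for λ a power of 2 and 0 < ε < 1 with λ^ε ∈ ℤ define ρ_{λ,ε}(x) = ∑_{n∈ℤ} λ^{(1−ε)/2} φ(λx + λ^{1−ε}n), a smooth function on 𝕋. Then: (1) ∫_𝕋 ρ_{λ,ε} dx = 0; (2) for every 1 ≤ p ≤ ∞ there is a constant C(p,φ), independent of λ, with ‖ρ_{λ,ε}‖_{L^p(𝕋)} ≤ C(p,φ) λ^{(1−ε)(1/2 − 1/p)}; (3) ρ_{λ,ε}(x + λ^{−ε}) = ρ_{λ,ε}(x) for all x, i.e. ρ_{λ,ε} is 𝕋/λ^ε-periodic. -/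
import Mathlib


open MeasureTheory
open scoped ENNReal NNReal

/-- The intermittent slab `ρ_{λ,ε}(x) = ∑_{n ∈ ℤ} λ^{(1-ε)/2} φ(λx + λ^{1-ε} n)`,
viewed as a 1-periodic function on `ℝ` (i.e. a function on `𝕋`). -/
noncomputable def slab (φ : ℝ → ℝ) (lam ε : ℝ) (x : ℝ) : ℝ :=
  ∑' n : ℤ, lam ^ ((1 - ε) / 2) * φ (lam * x + lam ^ (1 - ε) * n)

lemma slab_eq_sum (φ : ℝ → ℝ) (hsupp : Function.support φ ⊆ Set.Ioo (-1 : ℝ) 1)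
    (lam ε : ℝ) (hlam : 1 ≤ lam) (hε1 : ε < 1) (m : ℤ) (hm : lam ^ ε = (m : ℝ))
    (x : ℝ) (hx0 : 0 ≤ x) (hx1 : x ≤ 1) :
    slab φ lam ε x = ∑ n ∈ Finset.Icc (-m) 0,
      lam ^ ((1 - ε) / 2) * φ (lam * x + lam ^ (1 - ε) * n) := by
  have hlam0 : (0:ℝ) < lam := lt_of_lt_of_le one_pos hlam
  have hL1 : 1 ≤ lam ^ (1 - ε) := Real.one_le_rpow hlam (by linarith)
  have hL0 : (0:ℝ) < lam ^ (1 - ε) := lt_of_lt_of_le one_pos hL1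
  have hmL : (m:ℝ) * lam ^ (1 - ε) = lam := by
    rw [← hm, ← Real.rpow_add hlam0]
    norm_num
  apply tsum_eq_sum
  intro n hn
  rcases eq_or_ne (φ (lam * x + lam ^ (1 - ε) * n)) 0 with h | h
  · rw [h, mul_zero]
  · exfalso
    obtain ⟨h1, h2⟩ := hsupp h
    apply hn
    rw [Finset.mem_Icc]
    have hlx0 : 0 ≤ lam * x := mul_nonneg hlam0.le hx0
    have hlx1 : lam * x ≤ lam := by nlinarith
    constructor
    · have key : -((m:ℝ) + 1) * lam ^ (1 - ε) < lam ^ (1 - ε) * n := by nlinarith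
      have : -((m:ℝ) + 1) < (n:ℝ) := by nlinarith
      have : -(m + 1) < n := by exact_mod_cast this
      omega
    · have key : lam ^ (1 - ε) * n < lam ^ (1 - ε) * 1 := by nlinarith
      have : (n:ℝ) < 1 := by nlinarith
      have : n < 1 := by exact_mod_cast this
      omega

lemma slab_abs_le (φ : ℝ → ℝ) (hsupp : Function.support φ ⊆ Set.Ioo (-1 : ℝ) 1)
    (M : ℝ) (hM : ∀ y, |φ y| ≤ M)
    (lam ε : ℝ) (hlam : 1 ≤ lam) (hε1 : ε < 1) (x : ℝ) :
    |slab φ lam ε x| ≤ 3 * M * lam ^ ((1 - ε) / 2) := by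
  have hlam0 : (0:ℝ) < lam := lt_of_lt_of_le one_pos hlam
  have ha0 : (0:ℝ) ≤ lam ^ ((1 - ε) / 2) := (Real.rpow_pos_of_pos hlam0 _).le
  have hL1 : 1 ≤ lam ^ (1 - ε) := Real.one_le_rpow hlam (by linarith)
  have hM0 : 0 ≤ M := le_trans (abs_nonneg _) (hM 0)
  by_cases hex : ∀ n : ℤ, φ (lam * x + lam ^ (1 - ε) * n) = 0
  · have h0 : slab φ lam ε x = 0 := by
      simp only [slab]
      rw [tsum_congr (fun n => by rw [hex n, mul_zero])]
      exact tsum_zero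
    rw [h0, abs_zero]; positivity
  · push_neg at hex
    obtain ⟨n₀, h₀⟩ := hex
    obtain ⟨h3, h4⟩ := hsupp h₀
    have heq : slab φ lam ε x = ∑ n ∈ ({n₀ - 1, n₀, n₀ + 1} : Finset ℤ),
        lam ^ ((1 - ε) / 2) * φ (lam * x + lam ^ (1 - ε) * n) := by
      apply tsum_eq_sum
      intro n hn
      rcases eq_or_ne (φ (lam * x + lam ^ (1 - ε) * n)) 0 with h | h
      · rw [h, mul_zero]
      · exfalso
        obtain ⟨h1, h2⟩ := hsupp h
        apply hn
        simp only [Finset.mem_insert, Finset.mem_singleton]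
        have hd1 : lam ^ (1 - ε) * ((n:ℝ) - n₀) < 2 := by nlinarith
        have hd2 : -2 < lam ^ (1 - ε) * ((n:ℝ) - n₀) := by nlinarith
        have hc1 : (n:ℝ) - n₀ < 2 := by
          by_contra hge
          push_neg at hge
          have h20 : (0:ℝ) ≤ (n:ℝ) - n₀ := by linarith
          have := mul_le_mul_of_nonneg_right hL1 h20
          nlinarith
        have hc2 : -2 < (n:ℝ) - n₀ := by
          by_contra hle
          push_neg at hle
          have h20 : (n:ℝ) - n₀ ≤ 0 := by linarith
          have := mul_le_mul_of_nonpos_right hL1 h20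
          nlinarith
        have hc1' : n - n₀ < 2 := by exact_mod_cast (by push_cast; linarith : ((n - n₀ : ℤ):ℝ) < 2)
        have hc2' : (-2 : ℤ) < n - n₀ := by exact_mod_cast (by push_cast; linarith : (-2:ℝ) < ((n - n₀ : ℤ):ℝ))
        omega
    rw [heq]
    set F : Finset ℤ := {n₀ - 1, n₀, n₀ + 1} with hF
    have hcard : (F.card : ℝ) ≤ 3 := by
      have h1 : F.card ≤ 3 := by
        have a1 := Finset.card_insert_le (n₀ - 1) ({n₀, n₀ + 1} : Finset ℤ)
        have a2 := Finset.card_insert_le n₀ ({n₀ + 1} : Finset ℤ)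
        simp only [Finset.card_singleton] at a2
        simp only [hF]
        omega
      exact_mod_cast h1
    calc |∑ n ∈ F, lam ^ ((1 - ε) / 2) * φ (lam * x + lam ^ (1 - ε) * n)|
        ≤ ∑ n ∈ F, |lam ^ ((1 - ε) / 2) * φ (lam * x + lam ^ (1 - ε) * n)| :=
          Finset.abs_sum_le_sum_abs _ _
      _ ≤ ∑ _n ∈ F, lam ^ ((1 - ε) / 2) * M := by
          refine Finset.sum_le_sum fun n _ => ?_
          rw [abs_mul, abs_of_nonneg ha0]
          exact mul_le_mul_of_nonneg_left (hM _) ha0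
      _ = (F.card : ℝ) * (lam ^ ((1 - ε) / 2) * M) := by
          rw [Finset.sum_const, nsmul_eq_mul]
      _ ≤ 3 * (lam ^ ((1 - ε) / 2) * M) := by
          exact mul_le_mul_of_nonneg_right hcard (by positivity)
      _ = 3 * M * lam ^ ((1 - ε) / 2) := by ring

lemma slab_periodic (φ : ℝ → ℝ) (lam ε : ℝ) (hlam : 1 ≤ lam) (x : ℝ) :
    slab φ lam ε (x + lam ^ (-ε)) = slab φ lam ε x := by
  have hlam0 : (0:ℝ) < lam := lt_of_lt_of_le one_pos hlam
  have h1 : lam * (x + lam ^ (-ε)) = lam * x + lam ^ (1 - ε) := by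
    rw [mul_add]
    congr 1
    rw [show lam * lam ^ (-ε) = lam ^ (1:ℝ) * lam ^ (-ε) by rw [Real.rpow_one],
      ← Real.rpow_add hlam0]
    congr 1
  simp only [slab, h1]
  have h2 : ∀ n : ℤ, lam * x + lam ^ (1 - ε) + lam ^ (1 - ε) * n
      = lam * x + lam ^ (1 - ε) * ((n + 1 : ℤ) : ℝ) := by
    intro n; push_cast; ring
  rw [tsum_congr (fun n => by rw [h2 n])]
  exact (Equiv.addRight (1:ℤ)).tsum_eq
    (fun n => lam ^ ((1 - ε) / 2) * φ (lam * x + lam ^ (1 - ε) * n))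

lemma slab_int (φ : ℝ → ℝ) (hφ : ContDiff ℝ (⊤ : ℕ∞) φ) (hodd : ∀ x : ℝ, φ (-x) = -φ x)
    (hsupp : Function.support φ ⊆ Set.Ioo (-1 : ℝ) 1)
    (lam ε : ℝ) (hlam : 1 ≤ lam) (hε1 : ε < 1) (m : ℤ) (hm : lam ^ ε = (m : ℝ)) :
    ∫ x in (0:ℝ)..1, slab φ lam ε x = 0 := by
  have hφc : Continuous φ := hφ.continuous
  have hlam0 : (0:ℝ) < lam := lt_of_lt_of_le one_pos hlam
  have hmL : (m:ℝ) * lam ^ (1 - ε) = lam := by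
    rw [← hm, ← Real.rpow_add hlam0]
    norm_num
  set L : ℝ := lam ^ (1 - ε) with hL
  set a : ℝ := lam ^ ((1 - ε) / 2) with ha
  set Φ : ℝ → ℝ := fun t => ∫ y in (0:ℝ)..t, φ y with hΦ
  have hint : ∀ u v : ℝ, (∫ y in u..v, φ y) = Φ v - Φ u := by
    intro u v
    have h1 : (∫ y in (0:ℝ)..u, φ y) + (∫ y in u..v, φ y) = ∫ y in (0:ℝ)..v, φ y :=
      intervalIntegral.integral_add_adjacent_intervals
        (hφc.intervalIntegrable _ _) (hφc.intervalIntegrable _ _)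
    simp only [hΦ]
    linarith
  have hΦeven : ∀ t : ℝ, Φ (-t) = Φ t := by
    intro t
    have h1 : (∫ y in (0:ℝ)..t, φ (-y)) = ∫ y in (-t)..(0:ℝ), φ y := by
      simpa using intervalIntegral.integral_comp_neg (a := (0:ℝ)) (b := t) φ
    have h2 : (∫ y in (0:ℝ)..t, φ (-y)) = -Φ t := by
      rw [intervalIntegral.integral_congr (g := fun y => -φ y) (fun y _ => hodd y)]
      rw [intervalIntegral.integral_neg]
    have h3 : (∫ y in (-t)..(0:ℝ), φ y) = Φ 0 - Φ (-t) := hint _ _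
    have h4 : Φ 0 = 0 := by simp [hΦ]
    linarith
  have hEq : Set.EqOn (slab φ lam ε)
      (fun x => ∑ n ∈ Finset.Icc (-m) 0, a * φ (lam * x + L * n)) (Set.uIcc 0 1) := by
    intro x hx
    rw [Set.uIcc_of_le (by norm_num : (0:ℝ) ≤ 1)] at hx
    exact slab_eq_sum φ hsupp lam ε hlam hε1 m hm x hx.1 hx.2
  rw [intervalIntegral.integral_congr hEq]
  rw [intervalIntegral.integral_finset_sum (fun n _ =>
    (Continuous.intervalIntegrable (by fun_prop) _ _))]
  have hterm : ∀ n : ℤ, (∫ x in (0:ℝ)..1, a * φ (lam * x + L * n))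
      = a * lam⁻¹ * (Φ (L * ((n:ℝ) + m)) - Φ (L * n)) := by
    intro n
    rw [intervalIntegral.integral_const_mul]
    rw [intervalIntegral.integral_comp_mul_add φ (ne_of_gt hlam0) (L * n)]
    have h01 : lam * 0 + L * n = L * n := by ring
    have h11 : lam * 1 + L * n = L * ((n:ℝ) + m) := by
      rw [show lam = (m:ℝ) * L from hmL.symm]; ring
    rw [h01, h11, smul_eq_mul, hint]
    ring
  rw [Finset.sum_congr rfl (fun n _ => hterm n), ← Finset.mul_sum]
  have hzero : ∑ n ∈ Finset.Icc (-m) 0, (Φ (L * ((n:ℝ) + m)) - Φ (L * n)) = 0 := by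
    rw [Finset.sum_sub_distrib]
    have h1 : ∑ n ∈ Finset.Icc (-m) 0, Φ (L * ((n : ℝ) + m))
        = ∑ j ∈ Finset.Icc (-m + m) (0 + m), Φ (L * (j : ℝ)) := by
      rw [← Finset.map_add_right_Icc, Finset.sum_map]
      refine Finset.sum_congr rfl fun n _ => ?_
      simp [addRightEmbedding]
    have h2 : ∑ j ∈ Finset.Icc (-m + m) (0 + m), Φ (L * (j : ℝ))
        = ∑ n ∈ Finset.Icc (-m) 0, Φ (L * (n : ℝ)) := by
      simp only [neg_add_cancel, zero_add]
      refine Finset.sum_nbij' (fun j => -j) (fun n => -n) ?_ ?_ ?_ ?_ ?_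
      · intro j hj; simp only [Finset.mem_Icc] at hj ⊢; omega
      · intro n hn; simp only [Finset.mem_Icc] at hn ⊢; omega
      · intro j _; ring
      · intro n _; ring
      · intro j _
        push_cast
        rw [show L * (-(j:ℝ)) = -(L * j) by ring, hΦeven]
    rw [h1, h2]
    ring
  rw [hzero, mul_zero]

lemma slab_lp (φ : ℝ → ℝ) (hsupp : Function.support φ ⊆ Set.Ioo (-1 : ℝ) 1)
    (M : ℝ) (hM : ∀ y, |φ y| ≤ M) (hM1 : 1 ≤ M)
    (p : ENNReal) (hp : 1 ≤ p)
    (lam ε : ℝ) (hlam : 1 ≤ lam) (hε0 : 0 < ε) (hε1 : ε < 1)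
    (m : ℤ) (hm : lam ^ ε = (m : ℝ)) :
    eLpNorm (slab φ lam ε) p (volume.restrict (Set.Ioc (0:ℝ) 1))
      ≤ ENNReal.ofReal ((12 * M) * lam ^ ((1 - ε) * (1/2 - (1/p).toReal))) := by
  have hlam0 : (0:ℝ) < lam := lt_of_lt_of_le one_pos hlam
  set L : ℝ := lam ^ (1 - ε) with hLdef
  set a : ℝ := lam ^ ((1 - ε) / 2) with hadef
  have ha0 : 0 < a := Real.rpow_pos_of_pos hlam0 _
  have hm1 : (1:ℝ) ≤ (m:ℝ) := by
    rw [← hm]; exact Real.one_le_rpow hlam hε0.le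
  set r : ℝ := p.toReal⁻¹ with hrdef
  have hr0 : 0 ≤ r := by positivity
  have hr1 : r ≤ 1 := by
    by_cases hptop : p = ⊤
    · simp [hrdef, hptop]
    · have h1p : 1 ≤ p.toReal := by
        rw [← ENNReal.toReal_one]
        exact ENNReal.toReal_mono hptop hp
      rw [hrdef]
      exact inv_le_one_of_one_le₀ h1p
  have hpr : (1/p).toReal = r := by rw [one_div, ENNReal.toReal_inv]
  set ν := volume.restrict (Set.Ioc (0:ℝ) 1) with hν
  set S' : Finset ℤ := Finset.Icc (-m) 0 with hS'
  set g : ℝ → ℝ := fun x => ∑ n ∈ S', a * φ (lam * x + L * n) with hg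
  set U : Set ℝ := ⋃ n ∈ S', Set.Ioo ((-1 - L * n) / lam) ((1 - L * n) / lam) with hUdef
  have hUmeas : MeasurableSet U := by
    exact S'.measurableSet_biUnion (fun n _ => measurableSet_Ioo)
  have hgU : Function.support g ⊆ U := by
    intro x hx
    have hex : ∃ n ∈ S', a * φ (lam * x + L * n) ≠ 0 := by
      by_contra hcon
      push_neg at hcon
      exact hx (Finset.sum_eq_zero hcon)
    obtain ⟨n, hnS, hn0⟩ := hex
    have hφn : φ (lam * x + L * n) ≠ 0 := fun h => hn0 (by rw [h, mul_zero])
    obtain ⟨h1, h2⟩ := hsupp hφn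
    refine Set.mem_biUnion hnS ?_
    constructor
    · rw [div_lt_iff₀ hlam0]; nlinarith
    · rw [lt_div_iff₀ hlam0]; nlinarith
  have hUvol : volume U ≤ ENNReal.ofReal (4 * lam ^ (ε - 1)) := by
    have hLm : lam ^ (ε - 1) = (m:ℝ) / lam := by
      rw [← hm, Real.rpow_sub hlam0, Real.rpow_one]
    calc volume U ≤ ∑ n ∈ S', volume (Set.Ioo ((-1 - L * n) / lam) ((1 - L * n) / lam)) :=
          measure_biUnion_finset_le _ _
      _ = ∑ _n ∈ S', ENNReal.ofReal (2 / lam) := by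
          refine Finset.sum_congr rfl fun n _ => ?_
          rw [Real.volume_Ioo]
          congr 1
          field_simp
          ring
      _ = (S'.card : ℝ≥0∞) * ENNReal.ofReal (2 / lam) := by
          rw [Finset.sum_const, nsmul_eq_mul]
      _ ≤ ENNReal.ofReal (4 * lam ^ (ε - 1)) := by
          have hcard : (S'.card : ℝ) = (m:ℝ) + 1 := by
            rw [hS', Int.card_Icc]
            have hm1' : (1:ℤ) ≤ m := by exact_mod_cast hm1
            have h2 : (((0:ℤ) + 1 - -m).toNat : ℤ) = m + 1 := by omega
            exact_mod_cast h2
          rw [← ENNReal.ofReal_natCast, ← ENNReal.ofReal_mul (by positivity), hcard, hLm]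
          apply ENNReal.ofReal_le_ofReal
          rw [div_eq_mul_inv, div_eq_mul_inv]
          nlinarith [mul_nonneg (by linarith : (0:ℝ) ≤ (m:ℝ) - 1) (inv_pos.2 hlam0).le,
            (inv_pos.2 hlam0).le]
  have hcongr : slab φ lam ε =ᵐ[ν] g := by
    rw [hν, Filter.EventuallyEq, ae_restrict_iff' measurableSet_Ioc]
    refine ae_of_all _ fun x hx => ?_
    exact slab_eq_sum φ hsupp lam ε hlam hε1 m hm x hx.1.le hx.2
  rw [eLpNorm_congr_ae hcongr]
  rw [show g = U.indicator g from (Set.indicator_eq_self.2 hgU).symm]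
  rw [eLpNorm_indicator_eq_eLpNorm_restrict hUmeas]
  have hbound : ∀ᵐ x ∂(ν.restrict U), ‖g x‖ ≤ 3 * M * a := by
    have hres : ν.restrict U = volume.restrict (U ∩ Set.Ioc 0 1) := by
      rw [hν, Measure.restrict_restrict hUmeas]
    rw [hres]
    refine (ae_restrict_iff' (hUmeas.inter measurableSet_Ioc)).2 (ae_of_all _ fun x hx => ?_)
    rw [Real.norm_eq_abs]
    rw [show g x = slab φ lam ε x from
      (slab_eq_sum φ hsupp lam ε hlam hε1 m hm x hx.2.1.le hx.2.2).symm]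
    exact slab_abs_le φ hsupp M hM lam ε hlam hε1 x
  have hkey := eLpNorm_le_of_ae_bound (p := p) hbound
  have hmeas : (ν.restrict U) Set.univ ≤ ENNReal.ofReal (4 * lam ^ (ε - 1)) := by
    rw [Measure.restrict_apply_univ, hν, Measure.restrict_apply hUmeas]
    exact le_trans (measure_mono Set.inter_subset_left) hUvol
  have hX0 : (0:ℝ) < 4 * lam ^ (ε - 1) := by
    have := Real.rpow_pos_of_pos hlam0 (ε - 1)
    linarith
  rw [hpr]
  calc eLpNorm g p (ν.restrict U)
      ≤ (ν.restrict U) Set.univ ^ r * ENNReal.ofReal (3 * M * a) := hkey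
    _ ≤ ENNReal.ofReal (4 * lam ^ (ε - 1)) ^ r * ENNReal.ofReal (3 * M * a) :=
        mul_le_mul_left (ENNReal.rpow_le_rpow hmeas hr0) _
    _ = ENNReal.ofReal ((4 * lam ^ (ε - 1)) ^ r) * ENNReal.ofReal (3 * M * a) := by
        rw [← ENNReal.ofReal_rpow_of_pos hX0]
    _ = ENNReal.ofReal ((4 * lam ^ (ε - 1)) ^ r * (3 * M * a)) :=
        (ENNReal.ofReal_mul (by positivity)).symm
    _ ≤ ENNReal.ofReal ((12 * M) * lam ^ ((1 - ε) * (1/2 - r))) := by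
        apply ENNReal.ofReal_le_ofReal
        have hmr : (4 * lam ^ (ε - 1)) ^ r = 4 ^ r * lam ^ ((ε - 1) * r) := by
          rw [Real.mul_rpow (by norm_num) (Real.rpow_pos_of_pos hlam0 _).le,
            ← Real.rpow_mul hlam0.le]
        have hcomb : lam ^ ((ε - 1) * r) * lam ^ ((1 - ε) / 2) = lam ^ ((1 - ε) * (1/2 - r)) := by
          rw [← Real.rpow_add hlam0]; congr 1; ring
        have h4r : (4:ℝ) ^ r ≤ 4 := by
          calc (4:ℝ) ^ r ≤ (4:ℝ) ^ (1:ℝ) := Real.rpow_le_rpow_of_exponent_le (by norm_num) hr1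
            _ = 4 := Real.rpow_one 4
        have hM0 : (0:ℝ) ≤ M := by linarith
        have hXle : (0:ℝ) ≤ lam ^ ((1 - ε) * (1/2 - r)) := (Real.rpow_pos_of_pos hlam0 _).le
        calc (4 * lam ^ (ε - 1)) ^ r * (3 * M * a)
            = 4 ^ r * (3 * M * (lam ^ ((ε - 1) * r) * lam ^ ((1 - ε) / 2))) := by
              rw [hmr, hadef]; ring
          _ = 4 ^ r * (3 * M * lam ^ ((1 - ε) * (1/2 - r))) := by rw [hcomb]
          _ ≤ 4 * (3 * M * lam ^ ((1 - ε) * (1/2 - r))) :=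
              mul_le_mul_of_nonneg_right h4r (mul_nonneg (mul_nonneg (by norm_num) hM0) hXle)
          _ = (12 * M) * lam ^ ((1 - ε) * (1/2 - r)) := by ring

/-- **Intermittent slabs.** Fix `φ : ℝ → ℝ` smooth, odd, supported in `(-1,1)` and
`L²(ℝ)`-normalized. For `λ` a power of `2` and `0 < ε < 1` with `λ^ε ∈ ℤ`, the slab
`ρ_{λ,ε}` satisfies: (1) zero mean on `𝕋`; (2) for every `1 ≤ p ≤ ∞` an `L^p` bound
`‖ρ_{λ,ε}‖_{L^p(𝕋)} ≤ C(p,φ) λ^{(1-ε)(1/2 - 1/p)}` with `C(p,φ)` independent of `λ, ε`;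
(3) `ρ_{λ,ε}` is `λ^{-ε}`-periodic. -/
theorem slab_properties
    (φ : ℝ → ℝ) (hφ : ContDiff ℝ (⊤ : ℕ∞) φ) (hodd : ∀ x : ℝ, φ (-x) = -φ x)
    (hsupp : Function.support φ ⊆ Set.Ioo (-1 : ℝ) 1)
    (hnorm : ∫ x : ℝ, (φ x) ^ 2 = 1) :
    (∀ lam ε : ℝ, (∃ k : ℕ, lam = 2 ^ k) → 0 < ε → ε < 1 →
        (∃ m : ℤ, lam ^ ε = (m : ℝ)) →
        (∫ x in (0:ℝ)..1, slab φ lam ε x = 0) ∧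
        (∀ x : ℝ, slab φ lam ε (x + lam ^ (-ε)) = slab φ lam ε x)) ∧
    (∀ p : ENNReal, 1 ≤ p → ∃ C : ℝ, 0 < C ∧
      ∀ lam ε : ℝ, (∃ k : ℕ, lam = 2 ^ k) → 0 < ε → ε < 1 →
        (∃ m : ℤ, lam ^ ε = (m : ℝ)) →
        eLpNorm (slab φ lam ε) p (volume.restrict (Set.Ioc (0:ℝ) 1))
          ≤ ENNReal.ofReal (C * lam ^ ((1 - ε) * (1/2 - (1/p).toReal)))) := by
  have hφc : Continuous φ := hφ.continuous
  have hcs : HasCompactSupport φ :=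
    HasCompactSupport.of_support_subset_isCompact (isCompact_Icc (a := (-1:ℝ)) (b := 1))
      (hsupp.trans Set.Ioo_subset_Icc_self)
  obtain ⟨M₀, hM₀⟩ := hcs.exists_bound_of_continuous hφc
  set M : ℝ := max M₀ 1 with hMdef
  have hM : ∀ y, |φ y| ≤ M := fun y => le_trans (Real.norm_eq_abs (φ y) ▸ hM₀ y) (le_max_left _ _)
  have hM1 : (1:ℝ) ≤ M := le_max_right _ _
  constructor
  · rintro lam ε ⟨k, hkk⟩ hε0 hε1 ⟨m, hm⟩
    have hlam1 : (1:ℝ) ≤ lam := by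
      rw [hkk]; exact one_le_pow₀ (by norm_num)
    exact ⟨slab_int φ hφ hodd hsupp lam ε hlam1 hε1 m hm,
      fun x => slab_periodic φ lam ε hlam1 x⟩
  · intro p hp
    refine ⟨12 * M, by linarith, ?_⟩
    rintro lam ε ⟨k, hkk⟩ hε0 hε1 ⟨m, hm⟩
    have hlam1 : (1:ℝ) ≤ lam := by
      rw [hkk]; exact one_le_pow₀ (by norm_num)
    exact slab_lp φ hsupp M hM hM1 p hp lam ε hlam1 hε0 hε1 m hm
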